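/- arXiv:2301.09839 — 2 statements merged into one kernel-verified Lean document; each statement's English description precedes it below -/
import Mathlib

section
/- Let r ≥ 1, let C be a type of clients, let σ : Fin r → C assign to each backup slot the writer whose compare-and-swap succeeded on it, and let v : C → ℕ be injective (writers propose pairwise-distinct values). Define Maj c := 2 · |{i : Fin r | σ i = c}| > r, and define Win c := Maj c ∨ ((∀ c', ¬ Maj c') ∧ c is in the range of σ ∧ ∀ c' in the range of σ, v c ≤ v c'). Then there exists exactly one client c with Win c. That is, the SNAPSHOT conflict-resolution rules always decide exactly one last writer among the conflicting writers of a write round. -/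
/-!
Two strict majorities of the slots would have to share a slot, so at most one writer holds one,
and if one does it is the only winner. Otherwise Rule 3 applies alone: the range of `σ` is finite
and nonempty, so `v` attains a minimum on it, and that minimizer is unique because `v` is injective.
-/

open Finset

theorem existsUnique_or_of_forall_eq {C : Type*} {P Q : C → Prop}
    (hP : ∀ c c', P c → P c' → c = c') (hQ : ∃! c, Q c) :
    ∃! c, P c ∨ ((∀ c', ¬ P c') ∧ Q c) := by
  by_cases hsomeP : ∃ c, P c
  · obtain ⟨c, hc⟩ := hsomeP
    refine ⟨c, Or.inl hc, ?_⟩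
    rintro c' (hc' | ⟨hnone, -⟩)
    · exact hP c' c hc' hc
    · exact absurd hc (hnone c)
  · push Not at hsomeP
    obtain ⟨c, hc, hcuniq⟩ := hQ
    refine ⟨c, Or.inr ⟨hsomeP, hc⟩, ?_⟩
    rintro c' (hc' | ⟨-, hc'⟩)
    · exact absurd hc' (hsomeP c')
    · exact hcuniq c' hc'

theorem eq_of_card_univ_lt_two_mul_card_fiber {ι C : Type*} [Fintype ι] [DecidableEq C]
    (σ : ι → C) {c c' : C} (hc : Fintype.card ι < 2 * #{i | σ i = c})
    (hc' : Fintype.card ι < 2 * #{i | σ i = c'}) : c = c' := by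
  classical
  obtain ⟨i, hi⟩ := inter_nonempty_of_card_lt_card_add_card (subset_univ {i | σ i = c})
    (subset_univ {i | σ i = c'}) (by rw [card_univ]; omega)
  simp only [mem_inter, mem_filter, mem_univ, true_and] at hi
  exact hi.1.symm.trans hi.2

theorem Set.Finite.existsUnique_minimizer_of_injective {C β : Type*} [LinearOrder β]
    {S : Set C} (hfin : S.Finite) (hne : S.Nonempty) {v : C → β} (hv : Function.Injective v) :
    ∃! c, c ∈ S ∧ ∀ c' ∈ S, v c ≤ v c' := by
  obtain ⟨c, hcS, hcmin⟩ := S.exists_min_image v hfin hne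
  exact ⟨c, ⟨hcS, hcmin⟩, fun c' ⟨hc'S, hc'min⟩ =>
    hv (le_antisymm (hc'min c hcS) (hcmin c' hc'S))⟩

/-- SNAPSHOT conflict-resolution rules decide exactly one last writer:
a writer wins if it modified a strict majority of backup slots (Rules 1/2),
or, when no writer holds a strict majority, if it wrote the minimal value
among values written into the backup slots (Rule 3). -/
theorem snapshot_exactly_one_winner
    {C : Type*} [DecidableEq C] {r : ℕ} (hr : 1 ≤ r)
    (σ : Fin r → C) (v : C → ℕ) (hv : Function.Injective v) :
    ∃! c : C,
      (2 * (Finset.univ.filter (fun i : Fin r => σ i = c)).card > r) ∨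
      ((∀ c' : C, ¬ (2 * (Finset.univ.filter (fun i : Fin r => σ i = c')).card > r)) ∧
        c ∈ Set.range σ ∧ ∀ c' ∈ Set.range σ, v c ≤ v c') := by
  have : Nonempty (Fin r) := ⟨⟨0, hr⟩⟩
  refine existsUnique_or_of_forall_eq (fun c c' hc hc' => ?_)
    ((Set.finite_range σ).existsUnique_minimizer_of_injective (Set.range_nonempty σ) hv)
  exact eq_of_card_univ_lt_two_mul_card_fiber σ (by simpa using hc) (by simpa using hc')
end

section
/- Fix v₀ : ℕ and define step : ℕ → ℕ → ℕ by step s p = if s = v₀ then p else s, modeling a compare-and-swap with expected value v₀. Let l be a nonempty list of proposed values, each different from v₀ (∀ p ∈ l, p ≠ v₀). Then for every k with 1 ≤ k ≤ length l, folding step over the first k elements of l starting from v₀ yields the head of l: (l.take k).foldl step v₀ = l.head. In particular the slot's value is changed exactly once, by the first CAS in the sequence, and all later CAS operations fail. -/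
def casStep {α : Type*} [DecidableEq α] (v₀ s p : α) : α :=
  if s = v₀ then p else s

section
variable {α : Type*} [DecidableEq α] {v₀ : α}

theorem foldl_casStep_of_ne {s : α} (hs : s ≠ v₀) (l : List α) : l.foldl (casStep v₀) s = s :=
  List.foldl_fixed' (fun _ => if_neg hs) l

theorem foldl_casStep_cons_self {p : α} (hp : p ≠ v₀) (l : List α) :
    (p :: l).foldl (casStep v₀) v₀ = p := by
  rw [List.foldl_cons, casStep, if_pos rfl]
  exact foldl_casStep_of_ne hp l

end

/-- A backup slot whose value evolves by compare-and-swap with common expected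
value `v₀` and proposed values all different from `v₀` is modified exactly
once, by the first CAS in the sequence. -/
theorem cas_modifies_once
    (v₀ : ℕ) (l : List ℕ) (hne : l ≠ [])
    (hl : ∀ p ∈ l, p ≠ v₀) :
    ∀ k, 1 ≤ k → k ≤ l.length →
      (l.take k).foldl (fun s p => if s = v₀ then p else s) v₀ = l.head hne := by
  intro k hk _
  obtain ⟨p, t, rfl⟩ := List.exists_cons_of_ne_nil hne
  obtain ⟨m, rfl⟩ := Nat.exists_eq_add_of_le' hk
  exact foldl_casStep_cons_self (hl p List.mem_cons_self) (t.take m)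
end
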